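/- arXiv:1709.04722 — 8 statements merged into one kernel-verified Lean document; each statement's English description precedes it below -/
import Mathlib

section
/- Let a = (a_1,...,a_n) with 0 < a_1 ≤ ... ≤ a_n and define, for 1 ≤ k ≤ n, the lower quantity ξ̲_k(a) = a_1 σ_{k-1;1}(a)/σ_k(a) and upper quantity ξ̄_k(a) = a_n σ_{k-1;n}(a)/σ_k(a). Then 0 < ξ̲_k(a) ≤ k/n ≤ ξ̄_k(a) ≤ 1 for all 1 ≤ k ≤ n. -/
/-!
Since every `k`-subset is counted once for each of its elements, `∑ i, a i * σ_{k-1;i} = k σ_k`,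
so the numbers `a i σ_{k-1;i} / σ_k` have mean `k / n`. From `σ_k = σ_{k;i} + a i σ_{k-1;i}` and,
over `T = [n] ∖ {i, j}`, `σ_{k;i} - σ_{k;j} = (a j - a i) σ_{k-1}(T)`, the quantity `a i σ_{k-1;i}`
increases with `a i`: the first one is the smallest and the last one the largest, and both lie
between `0` and `σ_k`.
-/

open Finset

/-- The `k`-th elementary symmetric polynomial of `a : Fin n → ℝ`. -/
noncomputable def esymm (n k : ℕ) (a : Fin n → ℝ) : ℝ :=
  ∑ s ∈ Finset.powersetCard k (Finset.univ : Finset (Fin n)), ∏ i ∈ s, a i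

/-- The `k`-th elementary symmetric polynomial of `a` with the `i`-th entry removed. -/
noncomputable def esymmDel (n k : ℕ) (a : Fin n → ℝ) (i : Fin n) : ℝ :=
  ∑ s ∈ Finset.powersetCard k ((Finset.univ : Finset (Fin n)).erase i), ∏ j ∈ s, a j

noncomputable def esymmOn {ι R : Type*} [CommSemiring R] (a : ι → R) (k : ℕ) (t : Finset ι) :
    R :=
  ∑ s ∈ t.powersetCard k, ∏ j ∈ s, a j

section esymmOn

variable {ι R : Type*}

lemma esymmOn_nonneg [CommSemiring R] [PartialOrder R] [IsOrderedRing R] {a : ι → R}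
    (ha : ∀ i, 0 ≤ a i) (k : ℕ) (t : Finset ι) : 0 ≤ esymmOn a k t :=
  sum_nonneg fun _ _ => prod_nonneg fun i _ => ha i

lemma esymmOn_pos [CommSemiring R] [PartialOrder R] [IsStrictOrderedRing R] {a : ι → R}
    (ha : ∀ i, 0 < a i) {k : ℕ} {t : Finset ι} (hk : k ≤ #t) : 0 < esymmOn a k t :=
  sum_pos (fun _ _ => prod_pos fun i _ => ha i) (powersetCard_nonempty.2 hk)

lemma esymmOn_insert [CommSemiring R] [DecidableEq ι] (a : ι → R) (k : ℕ) {i : ι}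
    {t : Finset ι} (hi : i ∉ t) :
    esymmOn a (k + 1) (insert i t) = esymmOn a (k + 1) t + a i * esymmOn a k t := by
  have not_mem {s : Finset ι} (hs : s ∈ t.powersetCard k) : i ∉ s :=
    fun h => hi ((mem_powersetCard.1 hs).1 h)
  rw [esymmOn, powersetCard_succ_insert hi, sum_union, sum_image, esymmOn, esymmOn, mul_sum]
  · exact congrArg _ (sum_congr rfl fun s hs => prod_insert (not_mem hs))
  · intro s hs u hu h
    rw [← erase_insert (not_mem hs), ← erase_insert (not_mem hu), h]
  · refine disjoint_right.2 fun s hs hs' => ?_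
    obtain ⟨u, -, rfl⟩ := mem_image.1 hs
    exact hi ((mem_powersetCard.1 hs').1 (mem_insert_self i u))

end esymmOn

lemma esymm_eq_esymmOn {n : ℕ} (k : ℕ) (a : Fin n → ℝ) : esymm n k a = esymmOn a k univ :=
  rfl

lemma esymmDel_eq_esymmOn {n : ℕ} (k : ℕ) (a : Fin n → ℝ) (i : Fin n) :
    esymmDel n k a i = esymmOn a k (univ.erase i) := rfl

lemma esymm_succ_eq_esymmDel_add {n : ℕ} (k : ℕ) (a : Fin n → ℝ) (i : Fin n) :
    esymm n (k + 1) a = esymmDel n (k + 1) a i + a i * esymmDel n k a i := by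
  rw [esymm_eq_esymmOn, ← insert_erase (mem_univ i), esymmOn_insert a k (notMem_erase i _)]
  rfl

lemma sum_esymmDel {n : ℕ} (k : ℕ) (a : Fin n → ℝ) :
    ∑ i, esymmDel n k a i = ((n - k : ℕ) : ℝ) * esymm n k a := by
  -- a `k`-subset `s` avoids exactly the indices of `sᶜ`
  simp only [esymmDel]
  rw [sum_comm' (t' := powersetCard k univ) (s' := fun s => sᶜ), esymm, mul_sum]
  · refine sum_congr rfl fun s hs => ?_
    rw [sum_const, card_compl, (mem_powersetCard.1 hs).2, Fintype.card_fin, nsmul_eq_mul]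
  · intro i s
    simp only [mem_powersetCard, mem_compl, subset_erase, subset_univ, mem_univ, true_and]

lemma sum_mul_esymmDel {n k : ℕ} (hk : k + 1 ≤ n) (a : Fin n → ℝ) :
    ∑ i, a i * esymmDel n k a i = (k + 1) * esymm n (k + 1) a := by
  have hsplit (i : Fin n) : a i * esymmDel n k a i = esymm n (k + 1) a - esymmDel n (k + 1) a i :=
    eq_sub_of_add_eq' (esymm_succ_eq_esymmDel_add k a i).symm
  rw [sum_congr rfl fun i _ => hsplit i, sum_sub_distrib, sum_esymmDel, sum_const, card_univ,
    Fintype.card_fin, nsmul_eq_mul, Nat.cast_sub hk]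
  push_cast
  ring

lemma esymmDel_succ_le_of_le {n : ℕ} (k : ℕ) {a : Fin n → ℝ} (ha : ∀ i, 0 ≤ a i) {i j : Fin n}
    (hij : a i ≤ a j) : esymmDel n (k + 1) a j ≤ esymmDel n (k + 1) a i := by
  rcases eq_or_ne i j with rfl | hne
  · exact le_rfl
  set T := (univ.erase i).erase j with hT
  have hjT : j ∉ T := notMem_erase j _
  have hiT : i ∉ T := by rw [hT, erase_right_comm]; exact notMem_erase i _
  have hi : esymmDel n (k + 1) a i = esymmOn a (k + 1) T + a j * esymmOn a k T := by
    rw [esymmDel_eq_esymmOn, ← esymmOn_insert a k hjT,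
      insert_erase (mem_erase.2 ⟨hne.symm, mem_univ j⟩)]
  have hj : esymmDel n (k + 1) a j = esymmOn a (k + 1) T + a i * esymmOn a k T := by
    rw [esymmDel_eq_esymmOn, ← esymmOn_insert a k hiT, hT, erase_right_comm,
      insert_erase (mem_erase.2 ⟨hne, mem_univ i⟩)]
  rw [hi, hj]
  gcongr
  exact esymmOn_nonneg ha k T

lemma monotone_mul_esymmDel {n : ℕ} (k : ℕ) {a : Fin n → ℝ} (ha : ∀ i, 0 ≤ a i)
    (hmono : Monotone a) : Monotone fun i => a i * esymmDel n k a i := by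
  intro i j hij
  have := esymmDel_succ_le_of_le k ha (hmono hij)
  linarith [esymm_succ_eq_esymmDel_add k a i, esymm_succ_eq_esymmDel_add k a j]

lemma mul_esymmDel_le_esymm {n : ℕ} (k : ℕ) {a : Fin n → ℝ} (ha : ∀ i, 0 ≤ a i) (i : Fin n) :
    a i * esymmDel n k a i ≤ esymm n (k + 1) a := by
  have : 0 ≤ esymmDel n (k + 1) a i := esymmOn_nonneg ha (k + 1) (univ.erase i)
  linarith [esymm_succ_eq_esymmDel_add k a i]

/-- 0 < ξ̲_k(a) ≤ k/n ≤ ξ̄_k(a) ≤ 1 for 1 ≤ k ≤ n, where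
ξ̲_k(a) = a_1 σ_{k-1;1}(a)/σ_k(a) and ξ̄_k(a) = a_n σ_{k-1;n}(a)/σ_k(a). -/
theorem xi_bounds (n : ℕ) (hn : 0 < n) (a : Fin n → ℝ)
    (ha : ∀ i, 0 < a i) (hmono : Monotone a) (k : ℕ) (hk1 : 1 ≤ k) (hk2 : k ≤ n) :
    0 < a ⟨0, hn⟩ * esymmDel n (k - 1) a ⟨0, hn⟩ / esymm n k a ∧
    a ⟨0, hn⟩ * esymmDel n (k - 1) a ⟨0, hn⟩ / esymm n k a ≤ (k : ℝ) / n ∧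
    (k : ℝ) / n ≤ a ⟨n - 1, by omega⟩ * esymmDel n (k - 1) a ⟨n - 1, by omega⟩ / esymm n k a ∧
    a ⟨n - 1, by omega⟩ * esymmDel n (k - 1) a ⟨n - 1, by omega⟩ / esymm n k a ≤ 1 := by
  obtain ⟨m, rfl⟩ : ∃ m, k = m + 1 := ⟨k - 1, by omega⟩
  simp only [Nat.add_sub_cancel]
  set f : Fin n → ℝ := fun i => a i * esymmDel n m a i
  have ha' (i : Fin n) : 0 ≤ a i := (ha i).le
  have hσ : 0 < esymm n (m + 1) a := esymmOn_pos ha (by simpa using hk2)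
  have hn' : (0 : ℝ) < n := by exact_mod_cast hn
  have hf := monotone_mul_esymmDel m ha' hmono
  have hsum : ∑ i, f i = (m + 1) * esymm n (m + 1) a := sum_mul_esymmDel hk2 a
  have hlow : n • f ⟨0, hn⟩ ≤ ∑ i, f i := by
    simpa using card_nsmul_le_sum univ f _ fun i _ => hf (Fin.le_def.2 (Nat.zero_le _))
  have hhigh : ∑ i, f i ≤ n • f ⟨n - 1, by omega⟩ := by
    simpa using
      sum_le_card_nsmul univ f _ fun i _ => hf (Fin.le_def.2 (Nat.le_sub_one_of_lt i.isLt))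
  rw [nsmul_eq_mul] at hlow hhigh
  have hδ : 0 < esymmDel n m a ⟨0, hn⟩ := esymmOn_pos ha (by
    simp only [card_erase_of_mem, mem_univ, card_univ, Fintype.card_fin]; omega)
  refine ⟨div_pos (mul_pos (ha _) hδ) hσ, ?_, ?_, ?_⟩
  · rw [div_le_div_iff₀ hσ hn']
    push_cast
    linarith
  · rw [div_le_div_iff₀ hn' hσ]
    push_cast
    linarith
  · exact (div_le_one hσ).2 (mul_esymmDel_le_esymm m ha' _)
end

section
/- Let a = (a_1,...,a_n) with 0 < a_1 ≤ ... ≤ a_n. The upper quantities ξ̄_k(a) = a_n σ_{k-1;n}(a)/σ_k(a) are nondecreasing in k: 0 = ξ̄_0(a) < ξ̄_1(a) ≤ ξ̄_2(a) ≤ ... ≤ ξ̄_{n-1}(a) < ξ̄_n(a) = 1. -/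
open Finset

/-- ξ̄_k(a) = a_i σ_{k-1;i}(a)/σ_k(a) for k ≥ 1, with the convention ξ̄_0 = 0
(since σ_{-1} ≡ 0). -/
noncomputable def xibar (n : ℕ) (a : Fin n → ℝ) (i : Fin n) (k : ℕ) : ℝ :=
  if k = 0 then 0 else a i * esymmDel n (k - 1) a i / esymm n k a

namespace XibarAux

lemma mesymm_zero (s : Multiset ℝ) : s.esymm 0 = 1 := by
  simp [Multiset.esymm, Multiset.powersetCard_zero_left]

lemma mesymm_cons (c : ℝ) (s : Multiset ℝ) (k : ℕ) :
    (c ::ₘ s).esymm (k + 1) = s.esymm (k + 1) + c * s.esymm k := by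
  simp [Multiset.esymm, Multiset.powersetCard_cons, Multiset.map_map, Function.comp,
    Multiset.sum_map_mul_left]

lemma mesymm_nonneg (s : Multiset ℝ) (h : ∀ x ∈ s, 0 ≤ x) (k : ℕ) : 0 ≤ s.esymm k := by
  refine Multiset.sum_nonneg ?_
  intro x hx
  obtain ⟨t, ht, rfl⟩ := Multiset.mem_map.mp hx
  exact Multiset.prod_nonneg fun y hy =>
    h y (Multiset.mem_of_le (Multiset.mem_powersetCard.mp ht).1 hy)

lemma mesymm_eq_zero (s : Multiset ℝ) {k : ℕ} (h : Multiset.card s < k) : s.esymm k = 0 := by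
  simp [Multiset.esymm, Multiset.powersetCard_eq_empty _ h]

lemma mesymm_pos (s : Multiset ℝ) (h : ∀ x ∈ s, 0 < x) {k : ℕ} (hk : k ≤ Multiset.card s) :
    0 < s.esymm k := by
  have hne : s.powersetCard k ≠ 0 := by
    intro hzero
    have := Multiset.card_powersetCard k s
    rw [hzero] at this
    simp at this
    have := Nat.choose_pos hk
    omega
  obtain ⟨t, ht⟩ := Multiset.exists_mem_of_ne_zero hne
  have htle := (Multiset.mem_powersetCard.mp ht).1
  have hpos : 0 < t.prod := Multiset.prod_pos fun y hy => h y (Multiset.mem_of_le htle hy)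
  have hle : t.prod ≤ s.esymm k := by
    refine Multiset.single_le_sum ?_ _ (Multiset.mem_map_of_mem _ ht)
    intro x hx
    obtain ⟨u, hu, rfl⟩ := Multiset.mem_map.mp hx
    exact Multiset.prod_nonneg fun y hy =>
      (h y (Multiset.mem_of_le (Multiset.mem_powersetCard.mp hu).1 hy)).le
  linarith

lemma newton : ∀ (s : Multiset ℝ), (∀ x ∈ s, 0 < x) →
    ∀ k, s.esymm k * s.esymm (k + 2) ≤ s.esymm (k + 1) ^ 2 := by
  intro s
  induction s using Multiset.induction with
  | empty =>
    intro _ k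
    have h2 : (0 : Multiset ℝ).esymm (k + 2) = 0 := mesymm_eq_zero _ (by simp)
    have h1 : (0 : Multiset ℝ).esymm (k + 1) = 0 := mesymm_eq_zero _ (by simp)
    simp [h1, h2]
  | cons c t ih =>
    intro h k
    have hc : 0 < c := h c (Multiset.mem_cons_self c t)
    have ht : ∀ x ∈ t, 0 < x := fun x hx => h x (Multiset.mem_cons_of_mem hx)
    have htnn : ∀ x ∈ t, (0:ℝ) ≤ x := fun x hx => (ht x hx).le
    have iht := ih ht
    cases k with
    | zero =>
      rw [mesymm_zero, mesymm_cons, mesymm_cons, mesymm_zero]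
      have h1 := iht 0
      rw [mesymm_zero] at h1
      have hf1 := mesymm_nonneg t htnn 1
      have hf2 := mesymm_nonneg t htnn 2
      nlinarith
    | succ m =>
      rw [mesymm_cons, mesymm_cons, mesymm_cons]
      set f0 := t.esymm m with hf0
      set f1 := t.esymm (m + 1) with hf1
      set f2 := t.esymm (m + 2) with hf2
      set f3 := t.esymm (m + 3) with hf3
      have h1 : f0 * f2 ≤ f1 ^ 2 := iht m
      have h2 : f1 * f3 ≤ f2 ^ 2 := by simpa [show m + 1 + 2 = m + 3 by ring] using iht (m + 1)
      have n0 : 0 ≤ f0 := mesymm_nonneg t htnn m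
      have n1 : 0 ≤ f1 := mesymm_nonneg t htnn (m + 1)
      have n2 : 0 ≤ f2 := mesymm_nonneg t htnn (m + 2)
      have n3 : 0 ≤ f3 := mesymm_nonneg t htnn (m + 3)
      have cross : f0 * f3 ≤ f1 * f2 := by
        rcases eq_or_lt_of_le (mul_nonneg n1 n2) with hP | hP
        · -- f1 * f2 = 0, show f3 = 0
          have hf3z : f3 = 0 := by
            rcases mul_eq_zero.mp hP.symm with hz | hz
            · have : Multiset.card t < m + 1 := by
                by_contra hle
                exact absurd hz (ne_of_gt (mesymm_pos t ht (le_of_not_gt hle)))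
              exact mesymm_eq_zero t (by omega)
            · have : Multiset.card t < m + 2 := by
                by_contra hle
                exact absurd hz (ne_of_gt (mesymm_pos t ht (le_of_not_gt hle)))
              exact mesymm_eq_zero t (by omega)
          rw [hf3z, mul_zero, ← hP]
        · have key : (f0 * f2) * (f1 * f3) ≤ f1 ^ 2 * f2 ^ 2 :=
            mul_le_mul h1 h2 (mul_nonneg n1 n3) (sq_nonneg f1)
          have key2 : (f0 * f3) * (f1 * f2) ≤ (f1 * f2) * (f1 * f2) := by nlinarith [key]
          exact le_of_mul_le_mul_right key2 hP
      nlinarith [mul_le_mul_of_nonneg_left cross hc.le, mul_le_mul_of_nonneg_left h1 (sq_nonneg c)]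


lemma esymm_eq (n k : ℕ) (a : Fin n → ℝ) :
    esymm n k a = ((univ : Finset (Fin n)).val.map a).esymm k :=
  (Finset.esymm_map_val a univ k).symm

lemma esymmDel_eq (n k : ℕ) (a : Fin n → ℝ) (i : Fin n) :
    esymmDel n k a i = (((univ : Finset (Fin n)).erase i).val.map a).esymm k :=
  (Finset.esymm_map_val a (univ.erase i) k).symm

lemma cons_del (n : ℕ) (a : Fin n → ℝ) (i : Fin n) :
    (univ : Finset (Fin n)).val.map a = a i ::ₘ (((univ : Finset (Fin n)).erase i).val.map a) := by
  conv_lhs => rw [← Multiset.cons_erase (Finset.mem_val.mpr (mem_univ i))]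
  rw [Multiset.map_cons, Finset.erase_val]

lemma card_del (n : ℕ) (a : Fin n → ℝ) (i : Fin n) :
    Multiset.card (((univ : Finset (Fin n)).erase i).val.map a) = n - 1 := by
  rw [Multiset.card_map, ← Finset.card_def, Finset.card_erase_of_mem (mem_univ i)]
  simp

lemma pos_del (n : ℕ) (a : Fin n → ℝ) (ha : ∀ i, 0 < a i) (i : Fin n) :
    ∀ x ∈ ((univ : Finset (Fin n)).erase i).val.map a, 0 < x := by
  intro x hx
  obtain ⟨j, _, rfl⟩ := Multiset.mem_map.mp hx
  exact ha j

lemma esymm_rec (n k : ℕ) (a : Fin n → ℝ) (i : Fin n) :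
    esymm n (k + 1) a = esymmDel n (k + 1) a i + a i * esymmDel n k a i := by
  rw [esymm_eq, esymmDel_eq, esymmDel_eq, cons_del n a i, mesymm_cons]

end XibarAux



open XibarAux in
/-- The chain 0 = ξ̄_0(a) < ξ̄_1(a) ≤ ξ̄_2(a) ≤ ... ≤ ξ̄_{n-1}(a) < ξ̄_n(a) = 1,
where ξ̄ is taken at the largest entry a_n. -/
theorem xibar_monotone_chain (n : ℕ) (hn : 0 < n) (a : Fin n → ℝ)
    (ha : ∀ i, 0 < a i) (hmono : Monotone a) :
    xibar n a ⟨n - 1, by omega⟩ 0 = 0 ∧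
    0 < xibar n a ⟨n - 1, by omega⟩ 1 ∧
    (∀ k, 1 ≤ k → k + 1 ≤ n - 1 →
      xibar n a ⟨n - 1, by omega⟩ k ≤ xibar n a ⟨n - 1, by omega⟩ (k + 1)) ∧
    xibar n a ⟨n - 1, by omega⟩ (n - 1) < xibar n a ⟨n - 1, by omega⟩ n ∧
    xibar n a ⟨n - 1, by omega⟩ n = 1 := by
  set i : Fin n := ⟨n - 1, by omega⟩ with hi
  set M : Multiset ℝ := ((Finset.univ : Finset (Fin n)).erase i).val.map a with hM
  have hMpos : ∀ x ∈ M, 0 < x := pos_del n a ha i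
  have hMnn : ∀ x ∈ M, (0:ℝ) ≤ x := fun x hx => (hMpos x hx).le
  have hMcard : Multiset.card M = n - 1 := card_del n a i
  have hci : 0 < a i := ha i
  have hδnn : ∀ k, 0 ≤ esymmDel n k a i := fun k => by
    rw [esymmDel_eq]; exact mesymm_nonneg M hMnn k
  have hδpos : ∀ k, k ≤ n - 1 → 0 < esymmDel n k a i := fun k hk => by
    rw [esymmDel_eq]; exact mesymm_pos M hMpos (hMcard ▸ hk)
  have hσpos : ∀ k, k ≤ n → 0 < esymm n k a := by
    intro k hk
    rw [esymm_eq]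
    refine mesymm_pos _ (fun x hx => ?_) ?_
    · obtain ⟨j, _, rfl⟩ := Multiset.mem_map.mp hx; exact ha j
    · rw [Multiset.card_map]; simpa using hk
  have hδzero : esymmDel n 0 a i = 1 := by rw [esymmDel_eq]; exact mesymm_zero M
  have hnewton : ∀ m, esymmDel n m a i * esymmDel n (m + 2) a i ≤ esymmDel n (m + 1) a i ^ 2 := by
    intro m
    rw [esymmDel_eq, esymmDel_eq, esymmDel_eq]
    exact newton M hMpos m
  refine ⟨by simp [xibar], ?_, ?_, ?_, ?_⟩
  · rw [xibar]
    simp only [if_neg one_ne_zero]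
    exact div_pos (by rw [Nat.sub_self, hδzero]; linarith) (hσpos 1 hn)
  · intro k hk1 hk2
    obtain ⟨m, rfl⟩ := Nat.exists_eq_add_of_le hk1
    rw [xibar, xibar, if_neg (by omega), if_neg (by omega)]
    have e1 : 1 + m - 1 = m := by omega
    have e2 : 1 + m + 1 - 1 = m + 1 := by omega
    rw [e1, e2, show 1 + m = m + 1 by omega, show m + 1 + 1 = m + 2 by omega]
    have hσ1 : 0 < esymm n (m + 1) a := hσpos _ (by omega)
    have hσ2 : 0 < esymm n (m + 2) a := hσpos _ (by omega)
    rw [div_le_div_iff₀ hσ1 hσ2]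
    have r1 := esymm_rec n m a i
    have r2 := esymm_rec n (m + 1) a i
    have hN := hnewton m
    nlinarith [hδnn m, hδnn (m + 1), hδnn (m + 2), mul_le_mul_of_nonneg_left hN hci.le]
  · -- xibar (n-1) < xibar n
    have hlast : xibar n a i n = 1 := by
      obtain ⟨m, rfl⟩ : ∃ m, n = m + 1 := ⟨n - 1, by omega⟩
      rw [xibar, if_neg (by omega)]
      have hδz : esymmDel (m + 1) (m + 1) a i = 0 := by
        rw [esymmDel_eq]; exact mesymm_eq_zero _ (by rw [hMcard]; omega)
      have r := esymm_rec (m + 1) m a i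
      rw [show m + 1 - 1 = m by omega]
      rw [r, hδz, zero_add]
      exact div_self (ne_of_gt (mul_pos hci (hδpos m (by omega))))
    rw [hlast]
    rcases Nat.lt_or_ge n 2 with h2 | h2
    · have : n = 1 := by omega
      subst this
      simp [xibar]
    · obtain ⟨m, rfl⟩ : ∃ m, n = m + 2 := ⟨n - 2, by omega⟩
      rw [xibar, if_neg (by omega), show m + 2 - 1 = m + 1 by omega,
        show m + 1 - 1 = m by omega]
      rw [div_lt_one (hσpos (m + 1) (by omega))]
      have r := esymm_rec (m + 2) m a i
      have := hδpos (m + 1) (by omega)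
      nlinarith [hδnn m]
  · -- repeated: xibar n = 1
    obtain ⟨m, rfl⟩ : ∃ m, n = m + 1 := ⟨n - 1, by omega⟩
    rw [xibar, if_neg (by omega)]
    have hδz : esymmDel (m + 1) (m + 1) a i = 0 := by
      rw [esymmDel_eq]; exact mesymm_eq_zero _ (by rw [hMcard]; omega)
    have r := esymm_rec (m + 1) m a i
    rw [show m + 1 - 1 = m by omega, r, hδz, zero_add]
    exact div_self (ne_of_gt (mul_pos hci (hδpos m (by omega))))
end

section
/- For any λ ∈ ℝⁿ, the sign of X(λ) := Σ_{0≤2j≤n}(−1)^j σ_{2j}(λ) coincides with the sign of cos(Σ_{i=1}^n arctan λ_i), and the sign of Y(λ) := Σ_{0≤2j+1≤n}(−1)^j σ_{2j+1}(λ) coincides with the sign of sin(Σ_{i=1}^n arctan λ_i). -/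
open Finset

/-- X(λ) = Σ_{0≤2j≤n} (−1)^j σ_{2j}(λ). -/
noncomputable def Xpoly (n : ℕ) (a : Fin n → ℝ) : ℝ :=
  ∑ j ∈ Finset.range (n / 2 + 1), (-1 : ℝ) ^ j * esymm n (2 * j) a

/-- Y(λ) = Σ_{0≤2j+1≤n} (−1)^j σ_{2j+1}(λ). -/
noncomputable def Ypoly (n : ℕ) (a : Fin n → ℝ) : ℝ :=
  ∑ j ∈ Finset.range ((n + 1) / 2), (-1 : ℝ) ^ j * esymm n (2 * j + 1) a

/-- X̂(λ) = Σ_{0≤2j≤n} (−1)^j (2j) σ_{2j}(λ). -/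
noncomputable def Xhat (n : ℕ) (a : Fin n → ℝ) : ℝ :=
  ∑ j ∈ Finset.range (n / 2 + 1), (-1 : ℝ) ^ j * (2 * j : ℝ) * esymm n (2 * j) a

/-- Ŷ(λ) = Σ_{0≤2j+1≤n} (−1)^j (2j+1) σ_{2j+1}(λ). -/
noncomputable def Yhat (n : ℕ) (a : Fin n → ℝ) : ℝ :=
  ∑ j ∈ Finset.range ((n + 1) / 2), (-1 : ℝ) ^ j * (2 * j + 1 : ℝ) * esymm n (2 * j + 1) a

/-- The Lagrangian phase H(λ) = Σ arctan λ_i. -/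
noncomputable def phaseH (n : ℕ) (a : Fin n → ℝ) : ℝ :=
  ∑ i, Real.arctan (a i)

/-!
Expanding `∏ j, (1 + λ_j i)` in powers of `i` gives `X(λ) + Y(λ) i`. On the other hand each factor
is `√(1 + λ_j²) e^{i arctan λ_j}`, so the product is `R e^{i H(λ)}` with `R = ∏ j, √(1 + λ_j²) > 0`.
Hence `X = R cos H` and `Y = R sin H`.
-/

open Complex

theorem Finset.sum_range_eq_sum_even_add_sum_odd {M : Type*} [AddCommMonoid M] (f : ℕ → M)
    (m : ℕ) :
    ∑ k ∈ range m, f k =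
      ∑ j ∈ range ((m + 1) / 2), f (2 * j) + ∑ j ∈ range (m / 2), f (2 * j + 1) := by
  induction m with
  | zero => simp
  | succ m ih =>
    rw [sum_range_succ, ih]
    rcases Nat.even_or_odd' m with ⟨t, rfl | rfl⟩
    · rw [show (2 * t + 1 + 1) / 2 = t + 1 by omega, show (2 * t + 1) / 2 = t by omega,
        show 2 * t / 2 = t by omega, sum_range_succ, add_right_comm]
    · rw [show (2 * t + 1 + 1 + 1) / 2 = t + 1 by omega, show (2 * t + 1 + 1) / 2 = t + 1 by omega,
        show (2 * t + 1) / 2 = t by omega, sum_range_succ (fun j => f (2 * j + 1)), add_assoc]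

theorem Real.sign_mul_of_pos {r : ℝ} (hr : 0 < r) (x : ℝ) : Real.sign (r * x) = Real.sign x := by
  rcases lt_trichotomy x 0 with hx | rfl | hx
  · rw [sign_of_neg hx, sign_of_neg (mul_neg_of_pos_of_neg hr hx)]
  · rw [mul_zero]
  · rw [sign_of_pos hx, sign_of_pos (mul_pos hr hx)]

theorem prod_one_add_mul_eq_sum_esymm (n : ℕ) (a : Fin n → ℝ) (z : ℂ) :
    ∏ i, (1 + (a i : ℂ) * z) = ∑ k ∈ range (n + 1), (esymm n k a : ℂ) * z ^ k := by
  rw [prod_one_add, sum_powerset, card_univ, Fintype.card_fin]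
  refine sum_congr rfl fun k _ => ?_
  rw [esymm, ofReal_sum, sum_mul]
  refine sum_congr rfl fun t ht => ?_
  rw [prod_mul_distrib, prod_const, (mem_powersetCard.mp ht).2, ofReal_prod]

theorem prod_one_add_mul_I_eq_Xpoly_add_Ypoly_mul_I (n : ℕ) (a : Fin n → ℝ) :
    ∏ i, (1 + (a i : ℂ) * I) = Xpoly n a + Ypoly n a * I := by
  rw [prod_one_add_mul_eq_sum_esymm, sum_range_eq_sum_even_add_sum_odd,
    show (n + 1 + 1) / 2 = n / 2 + 1 by omega, Xpoly, Ypoly]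
  push_cast
  rw [sum_mul]
  congr 1 <;> refine sum_congr rfl fun j _ => ?_
  · rw [pow_mul, I_sq, mul_comm]
  · rw [pow_succ, pow_mul, I_sq]
    ring

theorem one_add_mul_I_eq_sqrt_mul_exp_arctan (x : ℝ) :
    1 + x * I = √(1 + x ^ 2) * exp (Real.arctan x * I) := by
  have hs : √(1 + x ^ 2) ≠ 0 := (Real.sqrt_pos.mpr (by positivity)).ne'
  rw [exp_mul_I, ← ofReal_cos, ← ofReal_sin, Real.cos_arctan, Real.sin_arctan]
  push_cast
  field_simp
  rw [mul_div_cancel_right₀ _ (ofReal_ne_zero.mpr hs)]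

theorem prod_one_add_mul_I_eq_polar (n : ℕ) (a : Fin n → ℝ) :
    ∏ i, (1 + (a i : ℂ) * I) = (∏ i, √(1 + a i ^ 2) : ℝ) * exp (phaseH n a * I) := by
  simp_rw [one_add_mul_I_eq_sqrt_mul_exp_arctan, prod_mul_distrib, ← exp_sum, ← sum_mul,
    phaseH, ofReal_prod, ofReal_sum]

theorem Xpoly_add_Ypoly_mul_I_eq_polar (n : ℕ) (a : Fin n → ℝ) :
    (Xpoly n a : ℂ) + Ypoly n a * I = (∏ i, √(1 + a i ^ 2) : ℝ) * exp (phaseH n a * I) := by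
  rw [← prod_one_add_mul_I_eq_Xpoly_add_Ypoly_mul_I, prod_one_add_mul_I_eq_polar]

theorem Xpoly_eq_mul_cos_phaseH (n : ℕ) (a : Fin n → ℝ) :
    Xpoly n a = (∏ i, √(1 + a i ^ 2)) * Real.cos (phaseH n a) := by
  simpa only [add_re, ofReal_re, mul_I_re, ofReal_im, neg_zero, add_zero, re_ofReal_mul,
    exp_ofReal_mul_I_re] using congrArg re (Xpoly_add_Ypoly_mul_I_eq_polar n a)

theorem Ypoly_eq_mul_sin_phaseH (n : ℕ) (a : Fin n → ℝ) :
    Ypoly n a = (∏ i, √(1 + a i ^ 2)) * Real.sin (phaseH n a) := by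
  simpa only [add_im, ofReal_im, mul_I_im, ofReal_re, zero_add, im_ofReal_mul,
    exp_ofReal_mul_I_im] using congrArg im (Xpoly_add_Ypoly_mul_I_eq_polar n a)

/-- X(λ) has the same sign as cos H(λ), and Y(λ) has the same sign as sin H(λ). -/
theorem sign_X_Y_eq_sign_cos_sin (n : ℕ) (a : Fin n → ℝ) :
    Real.sign (Xpoly n a) = Real.sign (Real.cos (phaseH n a)) ∧
    Real.sign (Ypoly n a) = Real.sign (Real.sin (phaseH n a)) := by
  have hR : 0 < ∏ i, √(1 + a i ^ 2) := prod_pos fun i _ => Real.sqrt_pos.mpr (by positivity)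
  rw [Xpoly_eq_mul_cos_phaseH, Ypoly_eq_mul_sin_phaseH, Real.sign_mul_of_pos hR,
    Real.sign_mul_of_pos hR]
  exact ⟨rfl, rfl⟩
end

section
/- For any a ∈ ℝⁿ, X(a)Ŷ(a) − Y(a)X̂(a) = Σ_{k=1}^n Σ_{1≤i_1,...,i_k≤n} a_{i_1}²a_{i_2}²···a_{i_{k-1}}²a_{i_k}, where the inner sum runs over all k-tuples of distinct indices (equivalently, equals Σ_{p=0}^{n-1} S_{p+1}^p(a) with S_{p+1}^p(a) = Σ over sets of p+1 distinct indices, one distinguished, of the product of the squares of the p undistinguished entries times the distinguished entry). -/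
open Finset

/-- S_{p+1}^p(a): sum over sets of p+1 distinct indices with one distinguished index i,
of the product of the squares of the other p entries times a_i. -/
noncomputable def Srow (n : ℕ) (a : Fin n → ℝ) (p : ℕ) : ℝ :=
  ∑ s ∈ Finset.powersetCard (p + 1) (Finset.univ : Finset (Fin n)),
    ∑ i ∈ s, (∏ j ∈ s.erase i, (a j) ^ 2) * a i

/-!
With `P(z) = ∏ₖ (1 + aₖ z) = ∑ⱼ σⱼ zʲ` one has `P(i) = X + iY` and `i P'(i) = X̂ + iŶ`, so
`XŶ - YX̂ = Im (conj P(i) · i P'(i))`. Writing `i P'(i) = ∑ᵢ i aᵢ ∏_{k ≠ i} (1 + i aₖ)` and using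
`(1 - i aₖ)(1 + i aₖ) = 1 + aₖ²`, this product is `∑ᵢ (aᵢ² + i aᵢ) ∏_{k ≠ i} (1 + aₖ²)`, with
imaginary part `∑ᵢ aᵢ ∏_{k ≠ i} (1 + aₖ²)`. Expanding the product over the set of squared
indices gives the sum of the `S_{p+1}^p`.
-/

open Complex

section PowersetSums

variable {ι : Type*} [DecidableEq ι]

theorem Finset.sum_powerset_sum_eq_sum_sum_powerset_erase {M : Type*} [AddCommMonoid M]
    (s : Finset ι) (g : Finset ι → ι → M) :
    ∑ u ∈ s.powerset, ∑ i ∈ u, g u i = ∑ i ∈ s, ∑ t ∈ (s.erase i).powerset, g (insert i t) i := by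
  rw [sum_comm' (t' := s) (s' := fun i ↦ s.powerset.filter (i ∈ ·)) fun u i ↦ by
    simp only [mem_powerset, mem_filter]
    exact ⟨fun h ↦ ⟨⟨h.1, h.2⟩, h.1 h.2⟩, fun h ↦ ⟨h.1.1, h.1.2⟩⟩]
  refine sum_congr rfl fun i hi ↦ sum_nbij' (fun u ↦ u.erase i) (insert i) ?_ ?_ ?_ ?_ ?_
  · simp only [mem_filter, mem_powerset]
    exact fun u hu ↦ erase_subset_erase i hu.1
  · simp only [mem_filter, mem_powerset]
    exact fun t ht ↦ ⟨insert_subset hi (ht.trans (erase_subset i s)), mem_insert_self i t⟩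
  · simp only [mem_filter]
    exact fun u hu ↦ insert_erase hu.2
  · simp only [mem_powerset]
    exact fun t ht ↦ erase_insert fun h ↦ notMem_erase i s (ht h)
  · simp only [mem_filter]
    exact fun u hu ↦ by rw [insert_erase hu.2]

theorem Finset.sum_powerset_sum_prod_erase_mul {R : Type*} [CommSemiring R] (s : Finset ι)
    (g h : ι → R) :
    ∑ u ∈ s.powerset, ∑ i ∈ u, (∏ k ∈ u.erase i, g k) * h i =
      ∑ i ∈ s, (∏ k ∈ s.erase i, (1 + g k)) * h i := by
  rw [sum_powerset_sum_eq_sum_sum_powerset_erase]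
  refine sum_congr rfl fun i _ ↦ ?_
  rw [prod_one_add, sum_mul]
  refine sum_congr rfl fun t ht ↦ ?_
  rw [erase_insert fun hi ↦ notMem_erase i s (mem_powerset.1 ht hi)]

theorem Finset.sum_prod_erase_one_add_mul_self {R : Type*} [CommSemiring R] (s : Finset ι)
    (g : ι → R) :
    ∑ i ∈ s, (∏ k ∈ s.erase i, (1 + g k)) * g i = ∑ u ∈ s.powerset, #u • ∏ k ∈ u, g k := by
  rw [← sum_powerset_sum_prod_erase_mul]
  refine sum_congr rfl fun u _ ↦ ?_
  rw [← sum_const]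
  exact sum_congr rfl fun i hi ↦ prod_erase_mul u g hi

end PowersetSums

theorem sum_powerset_mul_prod_eq_sum_mul_esymm (n : ℕ) (a : Fin n → ℝ) (F : ℕ → ℂ) :
    ∑ u ∈ (univ : Finset (Fin n)).powerset, F #u * ∏ k ∈ u, (a k : ℂ) =
      ∑ j ∈ range (n + 1), F j * esymm n j a := by
  rw [sum_powerset, card_univ, Fintype.card_fin]
  refine sum_congr rfl fun j _ ↦ ?_
  rw [esymm, ofReal_sum, mul_sum]
  refine sum_congr rfl fun u hu ↦ ?_
  rw [(mem_powersetCard.1 hu).2, ofReal_prod]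

theorem sum_range_pow_mul_of_sq_eq_neg_one {R : Type*} [CommRing R] {z : R} (hz : z ^ 2 = -1)
    (n : ℕ) (c : ℕ → R) :
    ∑ j ∈ range (n + 1), z ^ j * c j =
      ∑ j ∈ range (n / 2 + 1), (-1) ^ j * c (2 * j) +
        z * ∑ j ∈ range ((n + 1) / 2), (-1) ^ j * c (2 * j + 1) := by
  rw [sum_range_eq_sum_even_add_sum_odd, show (n + 1 + 1) / 2 = n / 2 + 1 by omega, mul_sum]
  congr 1 <;> refine sum_congr rfl fun j _ ↦ ?_
  · rw [pow_mul, hz]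
  · rw [pow_succ, pow_mul, hz]
    ring

theorem prod_one_add_mul_eq_Xpoly_add_mul_Ypoly {z : ℂ} (hz : z ^ 2 = -1) (n : ℕ)
    (a : Fin n → ℝ) :
    ∏ k, (1 + z * a k) = Xpoly n a + z * Ypoly n a := by
  have hpow (u : Finset (Fin n)) : ∏ k ∈ u, z * a k = z ^ #u * ∏ k ∈ u, (a k : ℂ) := by
    rw [prod_mul_distrib, prod_const]
  rw [prod_one_add, sum_congr rfl fun u _ ↦ hpow u, sum_powerset_mul_prod_eq_sum_mul_esymm,
    sum_range_pow_mul_of_sq_eq_neg_one hz]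
  simp [Xpoly, Ypoly]

theorem sum_prod_erase_mul_eq_Xhat_add_mul_Yhat {z : ℂ} (hz : z ^ 2 = -1) (n : ℕ)
    (a : Fin n → ℝ) :
    ∑ i, (∏ k ∈ univ.erase i, (1 + z * a k)) * (z * a i) = Xhat n a + z * Yhat n a := by
  have hpow (u : Finset (Fin n)) :
      #u • ∏ k ∈ u, z * a k = z ^ #u * #u * ∏ k ∈ u, (a k : ℂ) := by
    rw [prod_mul_distrib, prod_const, nsmul_eq_mul]
    ring
  rw [sum_prod_erase_one_add_mul_self, sum_congr rfl fun u _ ↦ hpow u,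
    sum_powerset_mul_prod_eq_sum_mul_esymm (F := fun j ↦ z ^ j * j)]
  simp_rw [mul_assoc]
  rw [sum_range_pow_mul_of_sq_eq_neg_one hz]
  simp [Xhat, Yhat, mul_assoc]

theorem prod_one_sub_I_mul_mul_sum_prod_erase (n : ℕ) (a : Fin n → ℝ) :
    (∏ k, (1 - I * a k)) * ∑ i, (∏ k ∈ univ.erase i, (1 + I * a k)) * (I * a i) =
      ∑ i, ((∏ k ∈ univ.erase i, (1 + a k ^ 2) : ℝ) : ℂ) * (a i ^ 2 + I * a i) := by
  rw [mul_sum]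
  refine sum_congr rfl fun i _ ↦ ?_
  rw [← mul_prod_erase univ _ (mem_univ i)]
  set A := ∏ k ∈ univ.erase i, (1 - I * a k)
  set B := ∏ k ∈ univ.erase i, (1 + I * a k)
  have hnorm : ((∏ k ∈ univ.erase i, (1 + a k ^ 2) : ℝ) : ℂ) = A * B := by
    push_cast
    rw [← prod_mul_distrib]
    refine prod_congr rfl fun k _ ↦ ?_
    linear_combination (a k : ℂ) ^ 2 * I_sq
  rw [hnorm]
  linear_combination -(a i : ℂ) ^ 2 * A * B * I_sq

theorem sum_range_Srow (n : ℕ) (a : Fin n → ℝ) :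
    ∑ p ∈ range n, Srow n a p =
      ∑ u ∈ (univ : Finset (Fin n)).powerset, ∑ i ∈ u, (∏ k ∈ u.erase i, a k ^ 2) * a i := by
  rw [sum_powerset, card_univ, Fintype.card_fin, sum_range_succ']
  simp [Srow]

/-- X(a)Ŷ(a) − Y(a)X̂(a) = Σ_{p=0}^{n-1} S_{p+1}^p(a). -/
theorem XYhat_sub_YXhat_eq_sum_Srow (n : ℕ) (a : Fin n → ℝ) :
    Xpoly n a * Yhat n a - Ypoly n a * Xhat n a = ∑ p ∈ Finset.range n, Srow n a p := by
  have hP := prod_one_add_mul_eq_Xpoly_add_mul_Ypoly (z := -I) (by rw [neg_sq, I_sq]) n a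
  have hD := sum_prod_erase_mul_eq_Xhat_add_mul_Yhat I_sq n a
  have key := congrArg im (prod_one_sub_I_mul_mul_sum_prod_erase n a)
  simp only [neg_mul, ← sub_eq_add_neg] at hP
  rw [hP, hD, im_sum] at key
  rw [sum_range_Srow, sum_powerset_sum_prod_erase_mul]
  simpa [mul_im, ← ofReal_pow, -ofReal_prod, sub_eq_add_neg] using key
end

section
/- For any a ∈ ℝⁿ with all entries strictly positive, X(a)Ŷ(a) − Y(a)X̂(a) > 0. -/
open Finset

/-!
Put `P = ∏ⱼ (1 + i aⱼ)` and `Q = ∑ₖ i aₖ ∏_{j ≠ k} (1 + i aⱼ)`. Expanding the products,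
`P = ∑ₖ iᵏ σₖ = X + iY` and, since `Q` is the Euler operator `∑ₖ aₖ ∂/∂aₖ` applied to `P`,
`Q = ∑ₖ k iᵏ σₖ = X̂ + iŶ`. Hence `XŶ − YX̂ = Im (conj P · Q)`. Computed factor by factor,
`conj (1 + i aₖ) · i aₖ = aₖ² + i aₖ` and `conj (1 + i aⱼ) (1 + i aⱼ) = 1 + aⱼ²`, so
`Im (conj P · Q) = ∑ₖ aₖ ∏_{j ≠ k} (1 + aⱼ²)`, which is positive when every `aₖ > 0`.
-/

open Complex ComplexConjugate

namespace Finset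

variable {ι R : Type*} [DecidableEq ι] [CommSemiring R]

theorem sum_powerset_card_mul_prod (s : Finset ι) (x : ι → R) :
    ∑ t ∈ s.powerset, (#t : R) * ∏ i ∈ t, x i = ∑ i ∈ s, x i * ∏ j ∈ s.erase i, (1 + x j) := by
  induction s using Finset.induction_on with
  | empty => simp
  | insert b s hb ih =>
    have lhs : ∑ t ∈ s.powerset, (#(insert b t) : R) * ∏ i ∈ insert b t, x i =
        x b * ∑ t ∈ s.powerset, ((#t : R) * ∏ i ∈ t, x i + ∏ i ∈ t, x i) := by
      rw [mul_sum]
      refine sum_congr rfl fun t ht => ?_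
      have hbt : b ∉ t := fun h => hb (mem_powerset.1 ht h)
      rw [card_insert_of_notMem hbt, prod_insert hbt]
      push_cast
      ring
    have rhs : ∑ i ∈ s, x i * ∏ j ∈ (insert b s).erase i, (1 + x j) =
        (1 + x b) * ∑ i ∈ s, x i * ∏ j ∈ s.erase i, (1 + x j) := by
      rw [mul_sum]
      refine sum_congr rfl fun i hi => ?_
      rw [erase_insert_of_ne (ne_of_mem_of_not_mem hi hb).symm,
        prod_insert fun h => hb (mem_of_mem_erase h)]
      ring
    rw [sum_powerset_insert hb, sum_insert hb, erase_insert hb, lhs, rhs, sum_add_distrib, ih,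
      ← prod_one_add]
    ring

end Finset

theorem sum_powerset_mul_prod_I_mul_eq_sum_esymm (n : ℕ) (a : Fin n → ℝ) (g : ℕ → ℝ) :
    ∑ t ∈ (univ : Finset (Fin n)).powerset, (g #t : ℂ) * ∏ i ∈ t, I * a i =
      ∑ k ∈ range (n + 1), I ^ k * (g k * esymm n k a : ℝ) := by
  rw [sum_powerset, card_univ, Fintype.card_fin]
  refine sum_congr rfl fun k _ => ?_
  rw [esymm, ofReal_mul, ofReal_sum, mul_sum, mul_sum]
  refine sum_congr rfl fun t ht => ?_
  rw [prod_mul_distrib, prod_const, (mem_powersetCard.1 ht).2, ofReal_prod]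
  ring

theorem sum_range_succ_I_pow_mul_ofReal (n : ℕ) (c : ℕ → ℝ) :
    ∑ k ∈ range (n + 1), I ^ k * c k =
      ((∑ j ∈ range (n / 2 + 1), (-1) ^ j * c (2 * j) : ℝ) : ℂ) +
        ((∑ j ∈ range ((n + 1) / 2), (-1) ^ j * c (2 * j + 1) : ℝ) : ℂ) * I := by
  induction n with
  | zero => simp
  | succ n ih =>
    rw [sum_range_succ, ih]
    obtain ⟨m, rfl | rfl⟩ := Nat.even_or_odd' n
    · have hI : I ^ (2 * m + 1) = (-1) ^ m * I := by rw [pow_succ, pow_mul, I_sq]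
      rw [show (2 * m + 1) / 2 = m by omega, show (2 * m + 1 + 1) / 2 = m + 1 by omega,
        show 2 * m / 2 = m by omega, sum_range_succ (fun j => (-1 : ℝ) ^ j * c (2 * j + 1)) m, hI]
      push_cast
      ring
    · have hI : I ^ (2 * m + 1 + 1) = (-1) ^ (m + 1) := by
        rw [show 2 * m + 1 + 1 = 2 * (m + 1) by ring, pow_mul, I_sq]
      rw [show (2 * m + 1 + 1) / 2 = m + 1 by omega, show (2 * m + 1 + 1 + 1) / 2 = m + 1 by omega,
        show (2 * m + 1) / 2 + 1 = m + 1 by omega, sum_range_succ _ (m + 1), hI,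
        show 2 * (m + 1) = 2 * m + 1 + 1 by ring]
      push_cast
      ring

theorem prod_one_add_I_mul_eq_Xpoly_add_Ypoly_mul_I (n : ℕ) (a : Fin n → ℝ) :
    ∏ i, (1 + I * a i) = Xpoly n a + Ypoly n a * I := by
  have h := sum_powerset_mul_prod_I_mul_eq_sum_esymm n a 1
  simp only [Pi.one_apply, ofReal_one, one_mul] at h
  rw [prod_one_add, h, sum_range_succ_I_pow_mul_ofReal, Xpoly, Ypoly]

theorem sum_I_mul_mul_prod_erase_eq_Xhat_add_Yhat_mul_I (n : ℕ) (a : Fin n → ℝ) :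
    ∑ i, I * a i * ∏ j ∈ univ.erase i, (1 + I * a j) = Xhat n a + Yhat n a * I := by
  have h := sum_powerset_mul_prod_I_mul_eq_sum_esymm n a (↑)
  simp only [ofReal_natCast] at h
  rw [← sum_powerset_card_mul_prod, h, sum_range_succ_I_pow_mul_ofReal, Xhat, Yhat]
  simp only [Nat.cast_mul, Nat.cast_add, Nat.cast_ofNat, Nat.cast_one, mul_assoc]

theorem im_conj_prod_mul_sum_mul_prod_erase {ι : Type*} [DecidableEq ι] (s : Finset ι)
    (a : ι → ℝ) :
    (conj (∏ i ∈ s, (1 + I * a i)) * ∑ i ∈ s, I * a i * ∏ j ∈ s.erase i, (1 + I * a j)).im =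
      ∑ i ∈ s, a i * ∏ j ∈ s.erase i, (1 + a j ^ 2) := by
  have conj_mul_self : ∀ x : ℝ, conj (1 + I * x) * (1 + I * x) = ((1 + x ^ 2 : ℝ) : ℂ) := by
    intro x
    apply Complex.ext <;> simp [pow_two]
  rw [mul_sum, im_sum]
  refine sum_congr rfl fun i hi => ?_
  rw [← mul_prod_erase s _ hi, map_mul, map_prod]
  calc _ = (conj (1 + I * a i) * (I * a i) *
          ∏ j ∈ s.erase i, conj (1 + I * a j) * (1 + I * a j)).im := by
        rw [prod_mul_distrib]; ring_nf
    _ = a i * ∏ j ∈ s.erase i, (1 + a j ^ 2) := by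
        rw [prod_congr rfl fun j _ => conj_mul_self (a j), ← ofReal_prod]
        generalize ∏ j ∈ s.erase i, (1 + a j ^ 2) = r
        simp [mul_im]

theorem im_conj_add_mul_I_mul_add_mul_I (x y u v : ℝ) :
    (conj (x + y * I) * (u + v * I)).im = x * v - y * u := by
  simp [sub_eq_add_neg]

/-- For a with all entries positive, X(a)Ŷ(a) − Y(a)X̂(a) > 0. -/
theorem XYhat_sub_YXhat_pos (n : ℕ) (hn : 0 < n) (a : Fin n → ℝ) (ha : ∀ i, 0 < a i) :
    0 < Xpoly n a * Yhat n a - Ypoly n a * Xhat n a := by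
  have key := im_conj_prod_mul_sum_mul_prod_erase univ a
  rw [prod_one_add_I_mul_eq_Xpoly_add_Ypoly_mul_I, sum_I_mul_mul_prod_erase_eq_Xhat_add_Yhat_mul_I,
    im_conj_add_mul_I_mul_add_mul_I] at key
  rw [key]
  exact sum_pos (fun i _ => mul_pos (ha i) (prod_pos fun j _ => by positivity))
    ⟨⟨0, hn⟩, mem_univ _⟩
end

section
/- For every integer Q ≥ 1, the alternating sum Σ_{q=0}^{Q} (−1)^q (2q+1) C(2Q+1, Q−q) = 0, while for Q = 0 the sum equals 1. Here C(m,r) denotes the binomial coefficient. -/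
open Finset

/-- Partial alternating sum of binomial coefficients:
Σ_{k=0}^m (-1)^k C(n+1,k) = (-1)^m C(n,m). -/
lemma altA (n : ℕ) : ∀ m : ℕ, ∑ k ∈ Finset.range (m + 1),
    (-1 : ℤ) ^ k * Nat.choose (n + 1) k = (-1) ^ m * Nat.choose n m := by
  intro m
  induction m with
  | zero => simp
  | succ m ih =>
    rw [Finset.sum_range_succ, ih]
    have h : Nat.choose (n + 1) (m + 1) = Nat.choose n m + Nat.choose n (m + 1) :=
      Nat.choose_succ_succ n m
    rw [h]
    push_cast
    ring

/-- Weighted partial alternating sum: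
Σ_{k=0}^m (-1)^k k C(n+1,k) = -(n+1) Σ_{j=0}^{m-1} (-1)^j C(n,j). -/
lemma altB (n : ℕ) : ∀ m : ℕ, ∑ k ∈ Finset.range (m + 1),
    (-1 : ℤ) ^ k * k * Nat.choose (n + 1) k
    = -(n + 1) * ∑ j ∈ Finset.range m, (-1 : ℤ) ^ j * Nat.choose n j := by
  intro m
  induction m with
  | zero => simp
  | succ m ih =>
    rw [Finset.sum_range_succ, ih, Finset.sum_range_succ]
    have h : (m + 1) * Nat.choose (n + 1) (m + 1) = (n + 1) * Nat.choose n m := by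
      rw [mul_comm (m + 1), ← Nat.add_one_mul_choose_eq]
    have h' : ((m : ℤ) + 1) * Nat.choose (n + 1) (m + 1) = (n + 1) * Nat.choose n m := by
      exact_mod_cast congrArg (fun x : ℕ => (x : ℤ)) h
    push_cast
    push_cast at h'
    linear_combination (-1 : ℤ) ^ (m + 1) * h'

/-- Σ_{q=0}^{Q} (−1)^q (2q+1) C(2Q+1, Q−q) equals 0 for Q ≥ 1 and 1 for Q = 0. -/
theorem alternating_binomial_sum (Q : ℕ) :
    (1 ≤ Q → ∑ q ∈ Finset.range (Q + 1),
      (-1 : ℤ) ^ q * (2 * q + 1) * Nat.choose (2 * Q + 1) (Q - q) = 0) ∧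
    (Q = 0 → ∑ q ∈ Finset.range (Q + 1),
      (-1 : ℤ) ^ q * (2 * q + 1) * Nat.choose (2 * Q + 1) (Q - q) = 1) := by
  constructor
  · intro hQ
    obtain ⟨R, rfl⟩ : ∃ R, Q = R + 1 := ⟨Q - 1, (Nat.succ_pred_eq_of_pos hQ).symm⟩
    set Q := R + 1 with hQdef
    -- reflect the sum
    have hrefl : ∑ q ∈ Finset.range (Q + 1),
        (-1 : ℤ) ^ q * (2 * q + 1) * Nat.choose (2 * Q + 1) (Q - q)
        = ∑ k ∈ Finset.range (Q + 1),
        (-1 : ℤ) ^ (Q - k) * (2 * (Q - k : ℕ) + 1) * Nat.choose (2 * Q + 1) k := by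
      rw [← Finset.sum_range_reflect
        (fun k => (-1 : ℤ) ^ (Q - k) * (2 * (Q - k : ℕ) + 1) * Nat.choose (2 * Q + 1) k)]
      apply Finset.sum_congr rfl
      intro q hq
      have hq' : q ≤ Q := Nat.lt_succ_iff.mp (Finset.mem_range.mp hq)
      have h1 : Q + 1 - 1 - q = Q - q := by omega
      have h2 : Q - (Q - q) = q := by omega
      rw [h1, h2]
    rw [hrefl]
    -- rewrite each term
    have hterm : ∀ k ∈ Finset.range (Q + 1),
        (-1 : ℤ) ^ (Q - k) * (2 * (Q - k : ℕ) + 1) * Nat.choose (2 * Q + 1) k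
        = (-1) ^ Q * ((2 * Q + 1) * ((-1 : ℤ) ^ k * Nat.choose (2 * Q + 1) k)
            - 2 * ((-1 : ℤ) ^ k * k * Nat.choose (2 * Q + 1) k)) := by
      intro k hk
      have hk' : k ≤ Q := Nat.lt_succ_iff.mp (Finset.mem_range.mp hk)
      have hsign : (-1 : ℤ) ^ (Q - k) * (-1) ^ k = (-1) ^ Q := by
        rw [← pow_add, Nat.sub_add_cancel hk']
      have hkk : (-1 : ℤ) ^ k * (-1) ^ k = 1 := by
        rw [← pow_add]; exact Even.neg_one_pow ⟨k, rfl⟩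
      have hsign2 : (-1 : ℤ) ^ (Q - k) = (-1) ^ Q * (-1) ^ k := by
        rw [← hsign, mul_assoc, hkk, mul_one]
      have hcast : ((Q - k : ℕ) : ℤ) = (Q : ℤ) - k := by
        exact_mod_cast Int.ofNat_sub hk'
      rw [hsign2, hcast]
      ring
    rw [Finset.sum_congr rfl hterm, ← Finset.mul_sum, Finset.sum_sub_distrib,
      ← Finset.mul_sum, ← Finset.mul_sum]
    have e1 : ∑ k ∈ Finset.range (Q + 1), (-1 : ℤ) ^ k * Nat.choose (2 * Q + 1) k
        = (-1) ^ Q * Nat.choose (2 * Q) Q := altA (2 * Q) Q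
    have e2 : ∑ k ∈ Finset.range (Q + 1), (-1 : ℤ) ^ k * k * Nat.choose (2 * Q + 1) k
        = -(2 * Q + 1) * ∑ j ∈ Finset.range Q, (-1 : ℤ) ^ j * Nat.choose (2 * Q) j := by
      have := altB (2 * Q) Q
      push_cast at this ⊢
      exact this
    have e3 : ∑ j ∈ Finset.range Q, (-1 : ℤ) ^ j * Nat.choose (2 * Q) j
        = (-1) ^ R * Nat.choose (2 * R + 1) R := by
      have h2Q : 2 * Q = (2 * R + 1) + 1 := by omega
      rw [hQdef, h2Q]
      exact altA (2 * R + 1) R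
    rw [e1, e2, e3]
    have hhalf : Nat.choose (2 * Q) Q = 2 * Nat.choose (2 * R + 1) R := by
      have h2Q : 2 * Q = (2 * R + 1) + 1 := by omega
      rw [h2Q, hQdef, Nat.choose_succ_succ, Nat.choose_symm_half]
      omega
    have hR : (-1 : ℤ) ^ Q = -(-1 : ℤ) ^ R := by rw [hQdef, pow_succ]; ring
    rw [hR]
    push_cast [hhalf]
    ring
  · intro h; subst h; simp
end

section
/- For any a ∈ ℝⁿ and integers 0 ≤ j ≤ k ≤ n with j + k ≤ n, the product of elementary symmetric polynomials decomposes as σ_j(a)·σ_k(a) = Σ_{h=0}^{j} C(j+k−2h, j−h)·S_{j+k−h}^{h}(a), where S_L^M(a) is the sum, over all sets {i_1,...,i_L} of L distinct indices together with a choice of M of these positions to be squared, of a_{i_1}²···a_{i_M}²·a_{i_{M+1}}···a_{i_L}. -/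
open Finset

/-- S_L^M(a): sum over sets s of L distinct indices together with a choice of M of them
to be squared, of the product of squared entries times the remaining entries. -/
noncomputable def Sgen (n : ℕ) (a : Fin n → ℝ) (L M : ℕ) : ℝ :=
  ∑ s ∈ Finset.powersetCard L (Finset.univ : Finset (Fin n)),
    ∑ t ∈ Finset.powersetCard M s, (∏ j ∈ t, (a j) ^ 2) * ∏ j ∈ s \ t, a j

lemma prod_mul_prod_eq (n : ℕ) (a : Fin n → ℝ) (s u : Finset (Fin n)) :
    (∏ i ∈ s, a i) * ∏ i ∈ u, a i
      = (∏ i ∈ s ∩ u, (a i) ^ 2) * ∏ i ∈ (s ∪ u) \ (s ∩ u), a i := by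
  have h1 : (s ∪ u) \ (s ∩ u) = (s \ u) ∪ (u \ s) := by
    ext x; simp only [mem_sdiff, mem_union, mem_inter]; tauto
  have hdisj : Disjoint (s \ u) (u \ s) := by
    rw [Finset.disjoint_left]; intro x hx hy
    simp only [mem_sdiff] at hx hy; tauto
  rw [h1, Finset.prod_union hdisj]
  have hs : (∏ i ∈ s ∩ u, a i) * ∏ i ∈ s \ u, a i = ∏ i ∈ s, a i := by
    rw [← Finset.prod_union (Finset.disjoint_of_subset_left Finset.inter_subset_right
      Finset.sdiff_disjoint.symm)]
    congr 1
    ext x; simp only [mem_union, mem_inter, mem_sdiff]; tauto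
  have hu : (∏ i ∈ s ∩ u, a i) * ∏ i ∈ u \ s, a i = ∏ i ∈ u, a i := by
    rw [← Finset.prod_union (Finset.disjoint_of_subset_left Finset.inter_subset_left
      Finset.sdiff_disjoint.symm)]
    congr 1
    ext x; simp only [mem_union, mem_inter, mem_sdiff]; tauto
  rw [← hs, ← hu]
  simp [pow_two, Finset.prod_mul_distrib]
  ring

/-- σ_j(a)·σ_k(a) = Σ_{h=0}^{j} C(j+k−2h, j−h)·S_{j+k−h}^{h}(a) for j ≤ k, j+k ≤ n. -/
theorem esymm_mul_esymm_decomp (n : ℕ) (a : Fin n → ℝ) (j k : ℕ)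
    (hjk : j ≤ k) (hk : k ≤ n) (hsum : j + k ≤ n) :
    esymm n j a * esymm n k a
      = ∑ h ∈ Finset.range (j + 1),
          (Nat.choose (j + k - 2 * h) (j - h) : ℝ) * Sgen n a (j + k - h) h := by
  unfold esymm Sgen
  -- RHS: push the binomial coefficient inside and realize it as a sum over subsets w
  have hRHS : ∀ h ∈ Finset.range (j + 1),
      (Nat.choose (j + k - 2 * h) (j - h) : ℝ) *
        (∑ v ∈ Finset.powersetCard (j + k - h) (Finset.univ : Finset (Fin n)),
          ∑ t ∈ Finset.powersetCard h v, (∏ i ∈ t, (a i) ^ 2) * ∏ i ∈ v \ t, a i)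
      = ∑ v ∈ Finset.powersetCard (j + k - h) (Finset.univ : Finset (Fin n)),
          ∑ t ∈ Finset.powersetCard h v,
            ∑ _w ∈ Finset.powersetCard (j - h) (v \ t),
              (∏ i ∈ t, (a i) ^ 2) * ∏ i ∈ v \ t, a i := by
    intro h hh
    rw [Finset.mul_sum]
    refine Finset.sum_congr rfl fun v hv => ?_
    rw [Finset.mul_sum]
    refine Finset.sum_congr rfl fun t ht => ?_
    have hc : (v \ t).card = j + k - 2 * h := by
      rw [Finset.card_sdiff_of_subset (Finset.mem_powersetCard.1 ht).1,
        (Finset.mem_powersetCard.1 ht).2, (Finset.mem_powersetCard.1 hv).2]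
      simp only [Finset.mem_range] at hh
      omega
    rw [Finset.sum_const, nsmul_eq_mul, Finset.card_powersetCard, hc]
  rw [Finset.sum_congr rfl hRHS]
  -- flatten RHS into a sigma sum, LHS into a product sum
  rw [Finset.sum_mul_sum]
  rw [← Finset.sum_product']
  rw [Finset.sum_sigma', Finset.sum_sigma', Finset.sum_sigma']
  refine Finset.sum_nbij'
    (fun p => ⟨⟨⟨(p.1 ∩ p.2).card, p.1 ∪ p.2⟩, p.1 ∩ p.2⟩, p.1 \ p.2⟩)
    (fun q => (q.1.2 ∪ q.2, q.1.1.2 \ q.2)) ?_ ?_ ?_ ?_ ?_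
  · rintro ⟨s, u⟩ hp
    simp only [Finset.mem_product, Finset.mem_powersetCard_univ] at hp
    obtain ⟨hs, hu⟩ := hp
    have hle : (s ∩ u).card ≤ j := hs ▸ Finset.card_le_card Finset.inter_subset_left
    have hcard : (s ∪ u).card + (s ∩ u).card = j + k := by
      rw [Finset.card_union_add_card_inter, hs, hu]
    have hsd : s \ u = s \ (s ∩ u) := by
      ext x; simp only [mem_sdiff, mem_inter]; tauto
    have hcsd : (s \ u).card = j - (s ∩ u).card := by
      rw [hsd, Finset.card_sdiff_of_subset Finset.inter_subset_left, hs]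
    simp only [Finset.mem_sigma, Finset.mem_range, Finset.mem_powersetCard_univ,
      Finset.mem_powersetCard]
    refine ⟨⟨⟨by omega, Finset.subset_univ _, by omega⟩, Finset.inter_subset_union, trivial⟩,
      ?_, hcsd⟩
    intro x hx
    simp only [mem_sdiff, mem_union, mem_inter] at *
    tauto
  · rintro ⟨⟨⟨h, v⟩, t⟩, w⟩ hq
    simp only [Finset.mem_sigma, Finset.mem_range, Finset.mem_powersetCard_univ,
      Finset.mem_powersetCard] at hq
    obtain ⟨⟨⟨hh, -, hv⟩, htv, ht⟩, hwv, hw⟩ := hq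
    have hwv' : w ⊆ v := hwv.trans Finset.sdiff_subset
    have hdisj : Disjoint t w := by
      rw [Finset.disjoint_left]
      intro x hx hxw
      exact (Finset.mem_sdiff.1 (hwv hxw)).2 hx
    simp only [Finset.mem_product, Finset.mem_powersetCard_univ]
    constructor
    · rw [Finset.card_union_of_disjoint hdisj, ht, hw]; omega
    · rw [Finset.card_sdiff_of_subset hwv', hv, hw]; omega
  · rintro ⟨s, u⟩ hp
    simp only [Prod.mk.injEq]
    constructor
    · ext x; simp only [mem_union, mem_inter, mem_sdiff]; tauto
    · ext x; simp only [mem_sdiff, mem_union, mem_inter]; tauto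
  · rintro ⟨⟨⟨h, v⟩, t⟩, w⟩ hq
    simp only [Finset.mem_sigma, Finset.mem_range, Finset.mem_powersetCard_univ,
      Finset.mem_powersetCard] at hq
    obtain ⟨⟨⟨hh, -, hv⟩, htv, ht⟩, hwv, hw⟩ := hq
    have hxw_not : ∀ x ∈ t, x ∉ w := fun x hx hxw => (Finset.mem_sdiff.1 (hwv hxw)).2 hx
    have hst : (t ∪ w) ∩ (v \ w) = t := by
      ext x
      simp only [mem_inter, mem_union, mem_sdiff]
      constructor
      · rintro ⟨hx1 | hx1, hx2⟩
        · exact hx1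
        · exact absurd hx1 hx2.2
      · intro hx
        exact ⟨Or.inl hx, htv hx, hxw_not x hx⟩
    have huni : (t ∪ w) ∪ (v \ w) = v := by
      ext x
      simp only [mem_union, mem_sdiff]
      constructor
      · rintro ((hx | hx) | hx)
        · exact htv hx
        · exact (Finset.mem_sdiff.1 (hwv hx)).1
        · exact hx.1
      · intro hx
        by_cases hxw : x ∈ w
        · exact Or.inl (Or.inr hxw)
        · exact Or.inr ⟨hx, hxw⟩
    have hsd : (t ∪ w) \ (v \ w) = w := by
      ext x
      simp only [mem_sdiff, mem_union]
      constructor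
      · rintro ⟨hx1 | hx1, hx2⟩
        · exact absurd ⟨htv hx1, hxw_not x hx1⟩ hx2
        · exact hx1
      · intro hx
        exact ⟨Or.inr hx, fun hc => hc.2 hx⟩
    simp only
    rw [hst, huni, hsd, ht]
  · rintro ⟨s, u⟩ hp
    exact prod_mul_prod_eq n a s u
end

section
/- Fix a ∈ ℝⁿ with all entries positive and Σ_{i=1}^n arctan(a_i) = Θ where (n−2)π/2 ≤ Θ < nπ/2. Define Z(t a) = cos Θ · Y(t a) − sin Θ · X(t a) as a polynomial in t ∈ ℝ. Then t = 1 is a root of Z(t a), Z(t a) > 0 for all t > 1, and (d/dt) Z(t a) > 0 for all t ≥ 1. -/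
/-! With `λ = t • a`, `X(λ) + i Y(λ) = ∏ⱼ (1 + i λⱼ) = (∏ⱼ √(1 + λⱼ²)) e^{i H(λ)}`, hence
`Z(λ) = Im (e^{-iΘ} (X(λ) + i Y(λ))) = (∏ⱼ √(1 + λⱼ²)) sin (H(λ) - Θ)`. As `t` grows past `1`,
`H(t a)` increases from `Θ` but stays below `nπ/2 ≤ Θ + π`, so `Z(t a) > 0`. Differentiating the
product factor by factor gives `d/dt Z(t a) = Σᵢ aᵢ (∏_{j ≠ i} √(1 + t² aⱼ²)) cos (Hᵢ(t a) - Θ)`,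
where `Hᵢ` omits the `i`-th angle; `Hᵢ(t a) - Θ` lies in `(-π/2, π/2)` because
`Hᵢ(t a) > H(t a) - π/2 ≥ Θ - π/2` and `Hᵢ(t a) < (n - 1)π/2 ≤ Θ + π/2`. -/

open Finset

lemma sum_range_succ_eq_sum_even_add_sum_odd {M : Type*} [AddCommMonoid M] (f : ℕ → M)
    (n : ℕ) :
    ∑ k ∈ range (n + 1), f k
      = ∑ j ∈ range (n / 2 + 1), f (2 * j) + ∑ j ∈ range ((n + 1) / 2), f (2 * j + 1) := by
  induction n with
  | zero => simp
  | succ n ih =>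
    rw [sum_range_succ, ih]
    rcases Nat.even_or_odd (n + 1) with ⟨m, hm⟩ | ⟨m, hm⟩
    · rw [show (n + 1 + 1) / 2 = (n + 1) / 2 by omega,
        show (n + 1) / 2 + 1 = n / 2 + 1 + 1 by omega,
        sum_range_succ (fun j => f (2 * j)) (n / 2 + 1), show 2 * (n / 2 + 1) = n + 1 by omega]
      abel
    · rw [show (n + 1) / 2 + 1 = n / 2 + 1 by omega,
        show (n + 1 + 1) / 2 = (n + 1) / 2 + 1 by omega,
        sum_range_succ (fun j => f (2 * j + 1)) ((n + 1) / 2),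
        show 2 * ((n + 1) / 2) + 1 = n + 1 by omega]
      abel

lemma prod_one_add_mul_eq_sum_pow_mul {R : Type*} [CommSemiring R] (n : ℕ) (x : R)
    (c : Fin n → R) :
    ∏ i, (1 + x * c i) = ∑ k ∈ range (n + 1), x ^ k * ∑ t ∈ powersetCard k univ, ∏ i ∈ t, c i := by
  rw [prod_one_add, sum_powerset, card_univ, Fintype.card_fin]
  refine sum_congr rfl fun k _ => ?_
  rw [mul_sum]
  refine sum_congr rfl fun t ht => ?_
  rw [prod_mul_distrib, prod_const, (mem_powersetCard.mp ht).2]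

lemma Xpoly_add_I_mul_Ypoly (n : ℕ) (c : Fin n → ℝ) :
    (Xpoly n c : ℂ) + Complex.I * Ypoly n c = ∏ i, (1 + Complex.I * c i) := by
  rw [prod_one_add_mul_eq_sum_pow_mul, sum_range_succ_eq_sum_even_add_sum_odd]
  simp only [pow_add, pow_mul, Complex.I_sq, pow_one, Xpoly, Ypoly, esymm]
  push_cast
  rw [mul_sum]
  congr 1
  exact sum_congr rfl fun j _ => by ring

lemma one_add_I_mul_eq_polar (x : ℝ) :
    1 + Complex.I * x = (√(1 + x ^ 2) : ℂ) * Complex.exp (Real.arctan x * Complex.I) := by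
  have hr : (√(1 + x ^ 2) : ℂ) ≠ 0 := Complex.ofReal_ne_zero.mpr (by positivity)
  rw [Complex.exp_mul_I, ← Complex.ofReal_cos, ← Complex.ofReal_sin, Real.cos_arctan,
    Real.sin_arctan]
  push_cast
  field_simp

lemma exp_neg_mul_I_mul_prod_one_add_I_mul {ι : Type*} (s : Finset ι) (c : ι → ℝ) (Θ : ℝ) :
    Complex.exp (-Θ * Complex.I) * ∏ i ∈ s, (1 + Complex.I * c i)
      = ((∏ i ∈ s, √(1 + c i ^ 2) : ℝ) : ℂ)
          * Complex.exp ((∑ i ∈ s, Real.arctan (c i) - Θ : ℝ) * Complex.I) := by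
  simp only [one_add_I_mul_eq_polar, prod_mul_distrib, ← Complex.exp_sum, ← sum_mul]
  push_cast
  rw [mul_left_comm, ← Complex.exp_add]
  ring_nf

noncomputable def Zpoly (n : ℕ) (Θ : ℝ) (c : Fin n → ℝ) : ℝ :=
  Real.cos Θ * Ypoly n c - Real.sin Θ * Xpoly n c

lemma Zpoly_eq_im (n : ℕ) (Θ : ℝ) (c : Fin n → ℝ) :
    Zpoly n Θ c = (Complex.exp (-Θ * Complex.I) * ∏ i, (1 + Complex.I * c i)).im := by
  rw [← Xpoly_add_I_mul_Ypoly, ← Complex.ofReal_neg, Complex.mul_im,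
    Complex.exp_ofReal_mul_I_re, Complex.exp_ofReal_mul_I_im, Real.cos_neg, Real.sin_neg, Zpoly]
  simp only [Complex.add_im, Complex.add_re, Complex.mul_im, Complex.mul_re, Complex.ofReal_re,
    Complex.ofReal_im, Complex.I_re, Complex.I_im, mul_zero, zero_mul, one_mul, zero_add, add_zero,
    sub_self, neg_mul]
  ring

lemma Zpoly_eq (n : ℕ) (Θ : ℝ) (c : Fin n → ℝ) :
    Zpoly n Θ c = (∏ i, √(1 + c i ^ 2)) * Real.sin (phaseH n c - Θ) := by
  rw [Zpoly_eq_im, exp_neg_mul_I_mul_prod_one_add_I_mul, Complex.im_ofReal_mul,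
    Complex.exp_ofReal_mul_I_im, phaseH]

lemma hasDerivAt_Zpoly_smul (n : ℕ) (Θ : ℝ) (a : Fin n → ℝ) (t : ℝ) :
    HasDerivAt (fun s => Zpoly n Θ (fun i => s * a i))
      (∑ i, a i * ((∏ j ∈ univ.erase i, √(1 + (t * a j) ^ 2))
        * Real.cos (∑ j ∈ univ.erase i, Real.arctan (t * a j) - Θ))) t := by
  have hfactor (i : Fin n) : HasDerivAt (fun s : ℝ => 1 + Complex.I * ((s * a i : ℝ) : ℂ))
      (Complex.I * a i) t := by
    simpa using
      (((hasDerivAt_id t).mul_const (a i)).ofReal_comp.const_mul Complex.I).const_add 1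
  have hprod := (HasDerivAt.fun_finsetProd (u := univ) fun i _ => hfactor i).const_mul
    (Complex.exp (-Θ * Complex.I))
  have him := Complex.imCLM.hasFDerivAt.comp_hasDerivAt t hprod
  simp only [Function.comp_def, Complex.imCLM_apply, ← Zpoly_eq_im] at him
  refine him.congr_deriv ?_
  rw [mul_sum, Complex.im_sum]
  refine sum_congr rfl fun i _ => ?_
  have hmove (E P : ℂ) : E * (P * (Complex.I * a i)) = a i * (E * P * Complex.I) := by ring
  rw [smul_eq_mul, hmove, Complex.im_ofReal_mul, Complex.mul_I_im,
    exp_neg_mul_I_mul_prod_one_add_I_mul, Complex.re_ofReal_mul, Complex.exp_ofReal_mul_I_re]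

lemma sum_arctan_lt_card_mul {ι : Type*} {s : Finset ι} (hs : s.Nonempty) (c : ι → ℝ) :
    ∑ i ∈ s, Real.arctan (c i) < s.card * (Real.pi / 2) := by
  calc ∑ i ∈ s, Real.arctan (c i) < ∑ _i ∈ s, Real.pi / 2 :=
        sum_lt_sum_of_nonempty hs fun i _ => Real.arctan_lt_pi_div_two _
    _ = s.card * (Real.pi / 2) := by rw [sum_const, nsmul_eq_mul]

section phaseH

variable {n : ℕ}

lemma univ_nonempty_of_pos (hn : 0 < n) : (univ : Finset (Fin n)).Nonempty :=
  ⟨⟨0, hn⟩, mem_univ _⟩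

lemma phaseH_lt (hn : 0 < n) (c : Fin n → ℝ) : phaseH n c < n * Real.pi / 2 := by
  simpa [phaseH, mul_div_assoc] using sum_arctan_lt_card_mul (univ_nonempty_of_pos hn) c

lemma phaseH_pos (hn : 0 < n) {c : Fin n → ℝ} (hc : ∀ i, 0 < c i) : 0 < phaseH n c :=
  sum_pos (fun i _ => Real.arctan_pos.mpr (hc i)) (univ_nonempty_of_pos hn)

lemma phaseH_mono {c d : Fin n → ℝ} (h : ∀ i, c i ≤ d i) : phaseH n c ≤ phaseH n d :=
  sum_le_sum fun i _ => Real.arctan_strictMono.monotone (h i)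

lemma phaseH_strictMono (hn : 0 < n) {c d : Fin n → ℝ} (h : ∀ i, c i < d i) :
    phaseH n c < phaseH n d :=
  sum_lt_sum_of_nonempty (univ_nonempty_of_pos hn) fun i _ => Real.arctan_strictMono (h i)

lemma sum_erase_arctan_sub_mem_Ioo {c : Fin n → ℝ} {Θ : ℝ} (hΘ0 : 0 < Θ)
    (hΘ1 : ((n : ℝ) - 2) * Real.pi / 2 ≤ Θ) (hΘc : Θ ≤ phaseH n c) (i : Fin n) :
    ∑ j ∈ univ.erase i, Real.arctan (c j) - Θ ∈ Set.Ioo (-(Real.pi / 2)) (Real.pi / 2) := by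
  have hsplit := add_sum_erase univ (fun j => Real.arctan (c j)) (mem_univ i)
  constructor
  · have := Real.arctan_lt_pi_div_two (c i)
    rw [phaseH] at hΘc
    linarith
  · rcases (univ.erase i).eq_empty_or_nonempty with hempty | hne
    · rw [hempty, sum_empty]
      linarith [Real.pi_pos]
    · have := sum_arctan_lt_card_mul hne c
      rw [card_erase_of_mem (mem_univ i), card_univ, Fintype.card_fin,
        Nat.cast_sub (Nat.one_le_iff_ne_zero.mpr (Fin.pos i).ne'), Nat.cast_one] at this
      linarith

end phaseH

/-- For a positive vector a with H(a) = Θ, (n−2)π/2 ≤ Θ < nπ/2, the polynomial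
Z(t a) = cos Θ · Y(t a) − sin Θ · X(t a) vanishes at t = 1, is positive for t > 1,
and has positive derivative for t ≥ 1. -/
theorem Zta_pos_and_deriv_pos (n : ℕ) (a : Fin n → ℝ) (ha : ∀ i, 0 < a i)
    (Θ : ℝ) (hΘa : phaseH n a = Θ)
    (hΘ1 : ((n : ℝ) - 2) * Real.pi / 2 ≤ Θ) (hΘ2 : Θ < (n : ℝ) * Real.pi / 2) :
    (Real.cos Θ * Ypoly n (fun i => 1 * a i) - Real.sin Θ * Xpoly n (fun i => 1 * a i) = 0) ∧
    (∀ t : ℝ, 1 < t →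
      0 < Real.cos Θ * Ypoly n (fun i => t * a i) - Real.sin Θ * Xpoly n (fun i => t * a i)) ∧
    (∀ t : ℝ, 1 ≤ t →
      0 < deriv (fun s : ℝ =>
        Real.cos Θ * Ypoly n (fun i => s * a i) - Real.sin Θ * Xpoly n (fun i => s * a i)) t) := by
  have hn : 0 < n := Nat.pos_of_ne_zero fun h => by
    subst h
    simp [phaseH, ← hΘa] at hΘ2
  refine ⟨?_, fun t ht => ?_, fun t ht => ?_⟩
  · show Zpoly n Θ (fun i => 1 * a i) = 0
    simp [Zpoly_eq, phaseH, ← hΘa]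
  · show 0 < Zpoly n Θ (fun i => t * a i)
    have hΘH : Θ < phaseH n (fun i => t * a i) :=
      hΘa ▸ phaseH_strictMono hn fun i => lt_mul_of_one_lt_left (ha i) ht
    rw [Zpoly_eq]
    refine mul_pos (prod_pos fun i _ => by positivity) (Real.sin_pos_of_pos_of_lt_pi ?_ ?_)
    · linarith
    · linarith [phaseH_lt hn fun i => t * a i]
  · show 0 < deriv (fun s => Zpoly n Θ (fun i => s * a i)) t
    rw [(hasDerivAt_Zpoly_smul n Θ a t).deriv]
    have hΘH : Θ ≤ phaseH n (fun i => t * a i) :=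
      hΘa ▸ phaseH_mono fun i => le_mul_of_one_le_left (ha i).le ht
    refine sum_pos (fun i _ => mul_pos (ha i) (mul_pos (prod_pos fun j _ => by positivity) ?_))
      (univ_nonempty_of_pos hn)
    exact Real.cos_pos_of_mem_Ioo
      (sum_erase_arctan_sub_mem_Ioo (hΘa ▸ phaseH_pos hn ha) hΘ1 hΘH i)
end
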